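/- The Ionian dichotomy (I/J) = ({2,4,5,7,9,11}/{0,1,3,6,8,10}) of Z_12 is strong, with autocomplementarity p = T^5.11, i.e. x ↦ 11x + 5 = 5 − x mod 12. -/
import Mathlib


/-- The Ionian consonance set I ⊂ ℤ₁₂. -/
def IonianI : Set (ZMod 12) := {2,4,5,7,9,11}

lemma ionian_mem (x : ZMod 12) :
    x ∈ IonianI ↔ (x = 2 ∨ x = 4 ∨ x = 5 ∨ x = 7 ∨ x = 9 ∨ x = 11) := by
  simp [IonianI]

lemma rigid_aux : ∀ u t : ZMod 12,
    (∀ x : ZMod 12, (∃ a, (a = 2 ∨ a = 4 ∨ a = 5 ∨ a = 7 ∨ a = 9 ∨ a = 11) ∧ u * a + t = x)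
      ↔ (x = 2 ∨ x = 4 ∨ x = 5 ∨ x = 7 ∨ x = 9 ∨ x = 11)) → u = 1 ∧ t = 0 := by
  decide

/-- The Ionian dichotomy (I/J) = ({2,4,5,7,9,11}/{0,1,3,6,8,10}) is strong,
with autocomplementarity p = T⁵.11 : x ↦ 11x + 5 = 5 − x. -/
theorem ionian_strong :
    (({0,1,3,6,8,10} : Set (ZMod 12)) = IonianIᶜ) ∧
    (∀ u t : ZMod 12, IsUnit u →
      (fun x => u * x + t) '' IonianI = IonianI → u = 1 ∧ t = 0) ∧
    IsUnit (11 : ZMod 12) ∧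
    (fun x : ZMod 12 => 11 * x + 5) '' IonianI = IonianIᶜ := by
  refine ⟨?_, ?_, ?_, ?_⟩
  · ext x
    simp only [Set.mem_insert_iff, Set.mem_singleton_iff, Set.mem_compl_iff, ionian_mem]
    revert x; decide
  · intro u t _ h
    apply rigid_aux u t
    intro x
    rw [Set.ext_iff] at h
    have := h x
    simpa only [Set.mem_image, ionian_mem] using this
  · decide
  · ext x
    simp only [Set.mem_image, Set.mem_compl_iff, ionian_mem]
    revert x; decide
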